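/- Suppose the smooth functions α̃⁽⁺²⁾, α̃⁽⁻²⁾, F⁽⁺²⁾, F⁽⁻²⁾ on Ω satisfy the inhomogeneous Teukolsky equations 𝔗⁽±²⁾α̃⁽±²⁾ = F⁽±²⁾. Define ψ⁽⁺²⁾ = w⁻¹L̲α̃⁽⁺²⁾, Ψ⁽⁺²⁾ = w⁻¹L̲ψ⁽⁺²⁾, ψ⁽⁻²⁾ = w⁻¹Lα̃⁽⁻²⁾, Ψ⁽⁻²⁾ = w⁻¹Lψ⁽⁻²⁾. Then on Ω: 𝕽⁽⁺²⁾ψ⁽⁺²⁾ = L̲(w⁻¹F⁽⁺²⁾) − w′Ψ⁽⁺²⁾ + 6M w α̃⁽⁺²⁾ and 𝕽⁽⁻²⁾ψ⁽⁻²⁾ = L(w⁻¹F⁽⁻²⁾) + w′Ψ⁽⁻²⁾ − 6M w α̃⁽⁻²⁾. -/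

import Mathlib

/- Schwarzschild-Anti-de Sitter background: basic operators on functions
   u(t, r, ϑ, φ) with values in ℂ. -/

noncomputable section

open Filter Topology Set

namespace Grav

abbrev F4 : Type := ℝ → ℝ → ℝ → ℝ → ℂ

/-- `Δ(r) = r² + k²r⁴ − 2Mr`. -/
def Del (M k r : ℝ) : ℝ := r ^ 2 + k ^ 2 * r ^ 4 - 2 * M * r

/-- `∂ₜ`. -/
def dT (u : F4) : F4 := fun t r ϑ φ => deriv (fun s => u s r ϑ φ) t
/-- `∂ᵣ`. -/
def dR (u : F4) : F4 := fun t r ϑ φ => deriv (fun s => u t s ϑ φ) r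
/-- `∂_ϑ`. -/
def dTh (u : F4) : F4 := fun t r ϑ φ => deriv (fun s => u t r s φ) ϑ
/-- `∂_φ`. -/
def dPh (u : F4) : F4 := fun t r ϑ φ => deriv (fun s => u t r ϑ s) φ

/-- `L u = ∂ₜ u + (Δ/r²) ∂ᵣ u`. -/
def opL (M k : ℝ) (u : F4) : F4 := fun t r ϑ φ =>
  dT u t r ϑ φ + ((Del M k r / r ^ 2 : ℝ) : ℂ) * dR u t r ϑ φ

/-- `L̲ u = ∂ₜ u − (Δ/r²) ∂ᵣ u`. -/
def opLb (M k : ℝ) (u : F4) : F4 := fun t r ϑ φ =>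
  dT u t r ϑ φ - ((Del M k r / r ^ 2 : ℝ) : ℂ) * dR u t r ϑ φ

/-- `w = Δ/r⁴`. -/
def ww (M k r : ℝ) : ℝ := Del M k r / r ^ 4
/-- `w′ = w·(6M − 2r)/r²`. -/
def wwP (M k r : ℝ) : ℝ := ww M k r * (6 * M - 2 * r) / r ^ 2

/-- The angular operator `𝓛⁽⁺²⁾`. -/
def angP (u : F4) : F4 := fun t r ϑ φ =>
  -(Real.sin ϑ : ℂ)⁻¹ * deriv (fun x => (Real.sin x : ℂ) * dTh u t r x φ) ϑ
  - (((Real.sin ϑ) ^ 2 : ℝ) : ℂ)⁻¹ * dPh (dPh u) t r ϑ φ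
  - 4 * Complex.I * ((Real.cos ϑ / (Real.sin ϑ) ^ 2 : ℝ) : ℂ) * dPh u t r ϑ φ
  + 4 * (((Real.cos ϑ / Real.sin ϑ) ^ 2 : ℝ) : ℂ) * u t r ϑ φ
  + 4 * u t r ϑ φ

/-- The angular operator `𝓛⁽⁻²⁾`. -/
def angM (u : F4) : F4 := fun t r ϑ φ =>
  -(Real.sin ϑ : ℂ)⁻¹ * deriv (fun x => (Real.sin x : ℂ) * dTh u t r x φ) ϑ
  - (((Real.sin ϑ) ^ 2 : ℝ) : ℂ)⁻¹ * dPh (dPh u) t r ϑ φ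
  + 4 * Complex.I * ((Real.cos ϑ / (Real.sin ϑ) ^ 2 : ℝ) : ℂ) * dPh u t r ϑ φ
  + 4 * (((Real.cos ϑ / Real.sin ϑ) ^ 2 : ℝ) : ℂ) * u t r ϑ φ
  + 4 * u t r ϑ φ

/-- The Teukolsky operator `𝔗⁽⁺²⁾u = −LL̲u + 2(w′/w)L̲u − w(𝓛⁽⁺²⁾ − 2 + 6M/r)u`. -/
def Tp (M k : ℝ) (u : F4) : F4 := fun t r ϑ φ =>
  - opL M k (opLb M k u) t r ϑ φ
  + 2 * ((wwP M k r / ww M k r : ℝ) : ℂ) * opLb M k u t r ϑ φ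
  - ((ww M k r : ℝ) : ℂ) *
      (angP u t r ϑ φ - 2 * u t r ϑ φ + ((6 * M / r : ℝ) : ℂ) * u t r ϑ φ)

/-- The Teukolsky operator `𝔗⁽⁻²⁾u = −LL̲u − 2(w′/w)Lu − w(𝓛⁽⁻²⁾ − 2 + 6M/r)u`. -/
def Tm (M k : ℝ) (u : F4) : F4 := fun t r ϑ φ =>
  - opL M k (opLb M k u) t r ϑ φ
  - 2 * ((wwP M k r / ww M k r : ℝ) : ℂ) * opL M k u t r ϑ φ
  - ((ww M k r : ℝ) : ℂ) *
      (angM u t r ϑ φ - 2 * u t r ϑ φ + ((6 * M / r : ℝ) : ℂ) * u t r ϑ φ)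

/-- The Regge–Wheeler operator `𝕽⁽⁺²⁾u = −LL̲u − w(𝓛⁽⁺²⁾ − 6M/r)u`. -/
def RWp (M k : ℝ) (u : F4) : F4 := fun t r ϑ φ =>
  - opL M k (opLb M k u) t r ϑ φ
  - ((ww M k r : ℝ) : ℂ) * (angP u t r ϑ φ - ((6 * M / r : ℝ) : ℂ) * u t r ϑ φ)

/-- The Regge–Wheeler operator `𝕽⁽⁻²⁾u = −LL̲u − w(𝓛⁽⁻²⁾ − 6M/r)u`. -/
def RWm (M k : ℝ) (u : F4) : F4 := fun t r ϑ φ =>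
  - opL M k (opLb M k u) t r ϑ φ
  - ((ww M k r : ℝ) : ℂ) * (angM u t r ϑ φ - ((6 * M / r : ℝ) : ℂ) * u t r ϑ φ)

/-- The exterior region `Ω = {r > r₊, 0 < ϑ < π}` (as a subset of ℝ⁴). -/
def OmSet (rp : ℝ) : Set (ℝ × ℝ × ℝ × ℝ) :=
  {p | rp < p.2.1 ∧ 0 < p.2.2.1 ∧ p.2.2.1 < Real.pi}

/-- `u` is smooth on `Ω`. -/
def SmoothOnOm (rp : ℝ) (u : F4) : Prop :=
  ContDiffOn ℝ (⊤ : ℕ∞)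
    (fun p : ℝ × ℝ × ℝ × ℝ => u p.1 p.2.1 p.2.2.1 p.2.2.2) (OmSet rp)

/-- Multiplication by `w⁻¹`. -/
def winv (M k : ℝ) (u : F4) : F4 := fun t r ϑ φ => ((ww M k r : ℝ) : ℂ)⁻¹ * u t r ϑ φ
/-- Multiplication by `w`. -/
def wmul (M k : ℝ) (u : F4) : F4 := fun t r ϑ φ => ((ww M k r : ℝ) : ℂ) * u t r ϑ φ
/-- Pointwise complex conjugation. -/
def conjF (u : F4) : F4 := fun t r ϑ φ => (starRingEnd ℂ) (u t r ϑ φ)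

/-- `𝓛⁽⁺²⁾(𝓛⁽⁺²⁾ − 2)`. -/
def angSqP (u : F4) : F4 := angP (fun t r ϑ φ => angP u t r ϑ φ - 2 * u t r ϑ φ)
/-- `𝓛⁽⁻²⁾(𝓛⁽⁻²⁾ − 2)`. -/
def angSqM (u : F4) : F4 := angM (fun t r ϑ φ => angM u t r ϑ φ - 2 * u t r ϑ φ)

/-- `𝓛⁽⁺²⁾(𝓛⁽⁺²⁾ − 2) + 12M∂ₜ`. -/
def TSp (M : ℝ) (u : F4) : F4 := fun t r ϑ φ =>
  angSqP u t r ϑ φ + 12 * (M : ℂ) * dT u t r ϑ φ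
/-- `𝓛⁽⁻²⁾(𝓛⁽⁻²⁾ − 2) − 12M∂ₜ`. -/
def TSm (M : ℝ) (u : F4) : F4 := fun t r ϑ φ =>
  angSqM u t r ϑ φ - 12 * (M : ℂ) * dT u t r ϑ φ


/-!
Write `G_ε = ∂ₜ + ε (Δ/r²) ∂ᵣ`, so that `L = G₁` and `L̲ = G₋₁`, and treat both spins at once with
`ε = ±1`. Put `ψ = w⁻¹ G₋ε α`. Since `(Δ/r²) ∂ᵣ(w⁻¹) = −(w′/w) w⁻¹`, dividing the Teukolsky
equation by `w` gives the first-order identity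
`w⁻¹F = ε (w′/w) ψ − G_ε ψ − 𝓛α + (2 − 6M/r) α`.
Now apply `G₋ε`. It commutes with `G_ε` and with `𝓛` (equality of mixed partials on the open set
`Ω`), and `G₋ε α = wψ`, `G₋ε ψ = wΨ`. Along `(Δ/r²) ∂ᵣ` the factors `w′/w` and `6M/r` have
derivatives `w (2 − 12M/r)` and `−6Mw`, so with `ε² = 1` what remains is the Regge–Wheeler
operator applied to `ψ` plus the stated lower-order terms.
-/

theorem lineDeriv_fderiv_apply_comm {E F : Type*} [NormedAddCommGroup E] [NormedSpace ℝ E]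
    [NormedAddCommGroup F] [NormedSpace ℝ F] {f : E → F} {x : E} (hf : ContDiffAt ℝ 2 f x)
    (v w : E) :
    lineDeriv ℝ (fun y => fderiv ℝ f y v) x w = lineDeriv ℝ (fun y => fderiv ℝ f y w) x v := by
  have hf' : HasFDerivAt (fderiv ℝ f) (fderiv ℝ (fderiv ℝ f) x) x :=
    ((hf.fderiv_right (m := 1) le_rfl).differentiableAt one_ne_zero).hasFDerivAt
  have apply (a b : E) :
      lineDeriv ℝ (fun y => fderiv ℝ f y a) x b = fderiv ℝ (fderiv ℝ f) x b a := by
    simpa using ((hf'.clm_apply (hasFDerivAt_const a x)).hasLineDerivAt b).lineDeriv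
  rw [apply, apply, (hf.isSymmSndFDerivAt (by simp)).eq]

@[fun_prop]
theorem ContDiffOn.complex_ofReal {E : Type*} [NormedAddCommGroup E] [NormedSpace ℝ E]
    {f : E → ℝ} {s : Set E} {n : WithTop ℕ∞} (hf : ContDiffOn ℝ n f s) :
    ContDiffOn ℝ n (fun x => (f x : ℂ)) s :=
  Complex.ofRealCLM.contDiff.comp_contDiffOn hf

abbrev E4 : Type := ℝ × ℝ × ℝ × ℝ

def uncurry4 (u : F4) : E4 → ℂ := fun p => u p.1 p.2.1 p.2.2.1 p.2.2.2

def IsPartialDeriv (D : F4 → F4) (e : E4) : Prop :=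
  ∀ u p, uncurry4 (D u) p = lineDeriv ℝ (uncurry4 u) p e

theorem isPartialDeriv_dT : IsPartialDeriv dT (1, 0, 0, 0) := by
  rintro u ⟨t, r, ϑ, φ⟩
  simpa [lineDeriv, add_comm _ t, uncurry4, dT] using
    (deriv_comp_add_const (f := fun s => u s r ϑ φ) (a := t) (x := 0)).symm

theorem isPartialDeriv_dR : IsPartialDeriv dR (0, 1, 0, 0) := by
  rintro u ⟨t, r, ϑ, φ⟩
  simpa [lineDeriv, add_comm _ r, uncurry4, dR] using
    (deriv_comp_add_const (f := fun s => u t s ϑ φ) (a := r) (x := 0)).symm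

theorem isPartialDeriv_dTh : IsPartialDeriv dTh (0, 0, 1, 0) := by
  rintro u ⟨t, r, ϑ, φ⟩
  simpa [lineDeriv, add_comm _ ϑ, uncurry4, dTh] using
    (deriv_comp_add_const (f := fun s => u t r s φ) (a := ϑ) (x := 0)).symm

theorem isPartialDeriv_dPh : IsPartialDeriv dPh (0, 0, 0, 1) := by
  rintro u ⟨t, r, ϑ, φ⟩
  simpa [lineDeriv, add_comm _ φ, uncurry4, dPh] using
    (deriv_comp_add_const (f := fun s => u t r ϑ s) (a := φ) (x := 0)).symm

theorem isOpen_omSet (rp : ℝ) : IsOpen (OmSet rp) :=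
  (isOpen_lt continuous_const (by fun_prop : Continuous fun p : E4 => p.2.1)).inter
    ((isOpen_lt continuous_const (by fun_prop : Continuous fun p : E4 => p.2.2.1)).inter
      (isOpen_lt (by fun_prop : Continuous fun p : E4 => p.2.2.1) continuous_const))

theorem sin_ne_zero_of_mem_omSet {rp : ℝ} {p : E4} (hp : p ∈ OmSet rp) : Real.sin p.2.2.1 ≠ 0 :=
  (Real.sin_pos_of_pos_of_lt_pi hp.2.1 hp.2.2).ne'

section Smooth

variable {rp : ℝ} {c : ℝ → ℝ} {u v : F4} {t r ϑ φ : ℝ}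

theorem SmoothOnOm.add (hu : SmoothOnOm rp u) (hv : SmoothOnOm rp v) :
    SmoothOnOm rp (fun t r ϑ φ => u t r ϑ φ + v t r ϑ φ) :=
  ContDiffOn.add hu hv

theorem SmoothOnOm.sub (hu : SmoothOnOm rp u) (hv : SmoothOnOm rp v) :
    SmoothOnOm rp (fun t r ϑ φ => u t r ϑ φ - v t r ϑ φ) :=
  ContDiffOn.sub hu hv

theorem SmoothOnOm.radial_mul (hc : ContDiffOn ℝ (⊤ : ℕ∞) c (Ioi rp)) (hu : SmoothOnOm rp u) :
    SmoothOnOm rp (fun t r ϑ φ => (c r : ℂ) * u t r ϑ φ) :=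
  (ContDiffOn.complex_ofReal
    (hc.comp (by fun_prop : ContDiff ℝ (⊤ : ℕ∞) fun p : E4 => p.2.1).contDiffOn
      fun _ (hp : _ ∈ OmSet rp) => hp.1)).mul hu

theorem SmoothOnOm.contDiffAt (hu : SmoothOnOm rp u) {p : E4} (hp : p ∈ OmSet rp) :
    ContDiffAt ℝ (⊤ : ℕ∞) (uncurry4 u) p :=
  ContDiffOn.contDiffAt hu ((isOpen_omSet rp).mem_nhds hp)

theorem SmoothOnOm.differentiableAt (hu : SmoothOnOm rp u) {p : E4} (hp : p ∈ OmSet rp) :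
    DifferentiableAt ℝ (uncurry4 u) p :=
  (hu.contDiffAt hp).differentiableAt (by simp)

theorem SmoothOnOm.hasDerivAt_dR (hu : SmoothOnOm rp u) (hp : (t, r, ϑ, φ) ∈ OmSet rp) :
    HasDerivAt (fun s => u t s ϑ φ) (dR u t r ϑ φ) r := by
  have h := (hu.differentiableAt hp).comp r
    (by fun_prop : DifferentiableAt ℝ (fun s : ℝ => ((t, s, ϑ, φ) : E4)) r)
  exact h.hasDerivAt

end Smooth

namespace IsPartialDeriv

variable {rp : ℝ} {D D' : F4 → F4} {e e' : E4} {u v : F4} {t r ϑ φ : ℝ}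

theorem eventuallyEq_fderiv (hD : IsPartialDeriv D e) (hu : SmoothOnOm rp u) {p : E4}
    (hp : p ∈ OmSet rp) :
    uncurry4 (D u) =ᶠ[𝓝 p] fun q => fderiv ℝ (uncurry4 u) q e := by
  filter_upwards [(isOpen_omSet rp).mem_nhds hp] with q hq
  rw [hD, (hu.differentiableAt hq).lineDeriv_eq_fderiv]

theorem smoothOnOm (hD : IsPartialDeriv D e) (hu : SmoothOnOm rp u) : SmoothOnOm rp (D u) :=
  fun p hp => (((hu.contDiffAt hp).fderiv_right (m := (⊤ : ℕ∞)) (by norm_cast)).clm_apply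
    contDiffAt_const).congr_of_eventuallyEq (hD.eventuallyEq_fderiv hu hp) |>.contDiffWithinAt

theorem congr (hD : IsPartialDeriv D e)
    (h : ∀ t r ϑ φ, (t, r, ϑ, φ) ∈ OmSet rp → u t r ϑ φ = v t r ϑ φ)
    (hp : (t, r, ϑ, φ) ∈ OmSet rp) : D u t r ϑ φ = D v t r ϑ φ := by
  have huv : uncurry4 u =ᶠ[𝓝 (t, r, ϑ, φ)] uncurry4 v := by
    filter_upwards [(isOpen_omSet rp).mem_nhds hp] with q hq
    exact h _ _ _ _ hq
  exact (hD u _).trans (huv.lineDeriv_eq.trans (hD v _).symm)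

theorem comm (hD : IsPartialDeriv D e) (hD' : IsPartialDeriv D' e') (hu : SmoothOnOm rp u)
    (hp : (t, r, ϑ, φ) ∈ OmSet rp) : D (D' u) t r ϑ φ = D' (D u) t r ϑ φ := by
  change uncurry4 (D (D' u)) (t, r, ϑ, φ) = uncurry4 (D' (D u)) (t, r, ϑ, φ)
  rw [hD, hD', (hD'.eventuallyEq_fderiv hu hp).lineDeriv_eq,
    (hD.eventuallyEq_fderiv hu hp).lineDeriv_eq]
  exact lineDeriv_fderiv_apply_comm ((hu.contDiffAt hp).of_le (by norm_cast)) e' e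

theorem map_add (hD : IsPartialDeriv D e) (hu : DifferentiableAt ℝ (uncurry4 u) (t, r, ϑ, φ))
    (hv : DifferentiableAt ℝ (uncurry4 v) (t, r, ϑ, φ)) :
    D (fun t r ϑ φ => u t r ϑ φ + v t r ϑ φ) t r ϑ φ = D u t r ϑ φ + D v t r ϑ φ := by
  change uncurry4 (D _) (t, r, ϑ, φ) = uncurry4 (D u) (t, r, ϑ, φ) + uncurry4 (D v) (t, r, ϑ, φ)
  rw [hD, hD, hD, hu.lineDeriv_eq_fderiv, hv.lineDeriv_eq_fderiv]
  exact ((hu.hasFDerivAt.add hv.hasFDerivAt).hasLineDerivAt e).lineDeriv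

theorem map_sub (hD : IsPartialDeriv D e) (hu : DifferentiableAt ℝ (uncurry4 u) (t, r, ϑ, φ))
    (hv : DifferentiableAt ℝ (uncurry4 v) (t, r, ϑ, φ)) :
    D (fun t r ϑ φ => u t r ϑ φ - v t r ϑ φ) t r ϑ φ = D u t r ϑ φ - D v t r ϑ φ := by
  change uncurry4 (D _) (t, r, ϑ, φ) = uncurry4 (D u) (t, r, ϑ, φ) - uncurry4 (D v) (t, r, ϑ, φ)
  rw [hD, hD, hD, hu.lineDeriv_eq_fderiv, hv.lineDeriv_eq_fderiv]
  exact ((hu.hasFDerivAt.sub hv.hasFDerivAt).hasLineDerivAt e).lineDeriv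

theorem map_mul_of_const {c : F4} (hD : IsPartialDeriv D e) (u : F4)
    (hc : ∀ s : ℝ, uncurry4 c ((t, r, ϑ, φ) + s • e) = c t r ϑ φ) :
    D (fun t r ϑ φ => c t r ϑ φ * u t r ϑ φ) t r ϑ φ = c t r ϑ φ * D u t r ϑ φ := by
  change uncurry4 (D _) (t, r, ϑ, φ) = c t r ϑ φ * uncurry4 (D u) (t, r, ϑ, φ)
  rw [hD, hD, lineDeriv, lineDeriv, ← deriv_const_mul_field]
  congr 1
  funext s
  exact congrArg (· * _) (hc s)

theorem map_angular_mul (hD : IsPartialDeriv D e) (he : e.2.2 = 0) (c : ℝ → ℂ) (u : F4) :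
    D (fun t r ϑ φ => c ϑ * u t r ϑ φ) t r ϑ φ = c ϑ * D u t r ϑ φ :=
  hD.map_mul_of_const (c := fun _ _ ϑ _ => c ϑ) u fun s => by
    have : e.2.2.1 = 0 := congrArg Prod.fst he
    simp [uncurry4, this]

end IsPartialDeriv

section Radial

variable {M k rp r : ℝ}

theorem Del_pos (hrp : 0 < rp) (hroot : rp + k ^ 2 * rp ^ 3 - 2 * M = 0) (hr : rp < r) :
    0 < Del M k r := by
  have hfac : Del M k r = r * (r - rp) * (1 + k ^ 2 * (r ^ 2 + r * rp + rp ^ 2)) := by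
    unfold Del; linear_combination r * hroot
  rw [hfac]
  have : 0 < r - rp := sub_pos.2 hr
  have : 0 < r := hrp.trans hr
  positivity

theorem ww_pos (hrp : 0 < rp) (hroot : rp + k ^ 2 * rp ^ 3 - 2 * M = 0) (hr : rp < r) :
    0 < ww M k r :=
  div_pos (Del_pos hrp hroot hr) (by have := hrp.trans hr; positivity)

theorem Del_eq_ww_mul (hr : r ≠ 0) : Del M k r = ww M k r * r ^ 4 := by
  unfold ww; field_simp

theorem winv_eq (M k : ℝ) (u : F4) :
    winv M k u = fun t r ϑ φ => (((ww M k r)⁻¹ : ℝ) : ℂ) * u t r ϑ φ := by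
  funext t r ϑ φ
  simp only [winv, Complex.ofReal_inv]

theorem hasDerivAt_Del : HasDerivAt (Del M k) (2 * r + 4 * k ^ 2 * r ^ 3 - 2 * M) r := by
  refine (((hasDerivAt_pow 2 r).add ((hasDerivAt_pow 4 r).const_mul (k ^ 2))).sub
    ((hasDerivAt_id r).const_mul (2 * M))).congr_deriv ?_
  ring

/-- The cosmological constant drops out: `w = r⁻² + k² − 2Mr⁻³`. -/
theorem hasDerivAt_ww (hr : r ≠ 0) : HasDerivAt (ww M k) ((6 * M - 2 * r) / r ^ 4) r := by
  refine (hasDerivAt_Del.div (hasDerivAt_pow 4 r) (pow_ne_zero 4 hr)).congr_deriv ?_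
  unfold Del
  field_simp
  ring

theorem contDiffOn_inv_ww (hrp : 0 < rp) (hroot : rp + k ^ 2 * rp ^ 3 - 2 * M = 0) :
    ContDiffOn ℝ (⊤ : ℕ∞) (fun r => (ww M k r)⁻¹) (Ioi rp) := by
  have hw : ∀ r ∈ Ioi rp, ww M k r ≠ 0 := fun r hr => (ww_pos hrp hroot hr).ne'
  unfold ww Del at *
  fun_prop (disch := first | assumption | exact fun r hr => pow_ne_zero 4 (hrp.trans hr).ne')

theorem SmoothOnOm.winv (hrp : 0 < rp) (hroot : rp + k ^ 2 * rp ^ 3 - 2 * M = 0) {u : F4}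
    (hu : SmoothOnOm rp u) : SmoothOnOm rp (winv M k u) := by
  rw [winv_eq]
  exact hu.radial_mul (contDiffOn_inv_ww hrp hroot)

/-- `w′/w`. -/
def wLogDeriv (M r : ℝ) : ℝ := (6 * M - 2 * r) / r ^ 2

theorem hasDerivAt_wLogDeriv (hr : r ≠ 0) :
    HasDerivAt (wLogDeriv M) ((2 * r - 12 * M) / r ^ 3) r := by
  refine (((hasDerivAt_const r (6 * M)).sub ((hasDerivAt_id r).const_mul 2)).div
    (hasDerivAt_pow 2 r) (pow_ne_zero 2 hr)).congr_deriv ?_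
  simp only [Pi.sub_apply, id]
  field_simp
  ring

theorem contDiffOn_wLogDeriv (hrp : 0 < rp) : ContDiffOn ℝ (⊤ : ℕ∞) (wLogDeriv M) (Ioi rp) := by
  unfold wLogDeriv
  fun_prop (disch := intro r hr; exact pow_ne_zero 2 (hrp.trans hr).ne')

end Radial

section DTR

variable {rp : ℝ} {V W c : ℝ → ℝ} {u v : F4} {t r ϑ φ : ℝ}

def dTR (V : ℝ → ℝ) (u : F4) : F4 := fun t r ϑ φ =>
  dT u t r ϑ φ + (V r : ℂ) * dR u t r ϑ φ

theorem SmoothOnOm.dTR (hV : ContDiffOn ℝ (⊤ : ℕ∞) V (Ioi rp)) (hu : SmoothOnOm rp u) :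
    SmoothOnOm rp (dTR V u) :=
  (isPartialDeriv_dT.smoothOnOm hu).add ((isPartialDeriv_dR.smoothOnOm hu).radial_mul hV)

theorem dTR_congr (h : ∀ t r ϑ φ, (t, r, ϑ, φ) ∈ OmSet rp → u t r ϑ φ = v t r ϑ φ)
    (hp : (t, r, ϑ, φ) ∈ OmSet rp) : dTR V u t r ϑ φ = dTR V v t r ϑ φ := by
  simp only [dTR, isPartialDeriv_dT.congr h hp, isPartialDeriv_dR.congr h hp]

theorem dTR_add (hu : SmoothOnOm rp u) (hv : SmoothOnOm rp v) (hp : (t, r, ϑ, φ) ∈ OmSet rp) :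
    dTR V (fun t r ϑ φ => u t r ϑ φ + v t r ϑ φ) t r ϑ φ
      = dTR V u t r ϑ φ + dTR V v t r ϑ φ := by
  simp only [dTR, isPartialDeriv_dT.map_add (hu.differentiableAt hp) (hv.differentiableAt hp),
    isPartialDeriv_dR.map_add (hu.differentiableAt hp) (hv.differentiableAt hp)]
  ring

theorem dTR_sub (hu : SmoothOnOm rp u) (hv : SmoothOnOm rp v) (hp : (t, r, ϑ, φ) ∈ OmSet rp) :
    dTR V (fun t r ϑ φ => u t r ϑ φ - v t r ϑ φ) t r ϑ φ
      = dTR V u t r ϑ φ - dTR V v t r ϑ φ := by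
  simp only [dTR, isPartialDeriv_dT.map_sub (hu.differentiableAt hp) (hv.differentiableAt hp),
    isPartialDeriv_dR.map_sub (hu.differentiableAt hp) (hv.differentiableAt hp)]
  ring

theorem dTR_radial_mul {c' : ℝ} (hc : HasDerivAt c c' r) (hu : SmoothOnOm rp u)
    (hp : (t, r, ϑ, φ) ∈ OmSet rp) :
    dTR V (fun t r ϑ φ => (c r : ℂ) * u t r ϑ φ) t r ϑ φ
      = (c r : ℂ) * dTR V u t r ϑ φ + (V r * c' : ℝ) * u t r ϑ φ := by
  have hR : dR (fun t r ϑ φ => (c r : ℂ) * u t r ϑ φ) t r ϑ φ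
      = c' * u t r ϑ φ + c r * dR u t r ϑ φ :=
    (hc.ofReal_comp.mul (hu.hasDerivAt_dR hp)).deriv
  simp only [dTR, hR, dT, deriv_const_mul_field]
  push_cast
  ring

theorem dTR_dTR {W' : ℝ} (hW : HasDerivAt W W' r) (hu : SmoothOnOm rp u)
    (hp : (t, r, ϑ, φ) ∈ OmSet rp) :
    dTR V (dTR W u) t r ϑ φ = dT (dT u) t r ϑ φ + W r * dT (dR u) t r ϑ φ
      + V r * (dR (dT u) t r ϑ φ + (W' : ℂ) * dR u t r ϑ φ + W r * dR (dR u) t r ϑ φ) := by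
  have hdT := (isPartialDeriv_dT.smoothOnOm hu).differentiableAt hp
  have hdR := isPartialDeriv_dR.smoothOnOm hu
  have hWdR : DifferentiableAt ℝ (uncurry4 fun t r ϑ φ => (W r : ℂ) * dR u t r ϑ φ)
      (t, r, ϑ, φ) := by
    have := hdR.differentiableAt hp
    have := hW.differentiableAt
    unfold uncurry4 at *
    fun_prop
  have hR : dR (fun t r ϑ φ => (W r : ℂ) * dR u t r ϑ φ) t r ϑ φ
      = W' * dR u t r ϑ φ + W r * dR (dR u) t r ϑ φ :=
    (hW.ofReal_comp.mul (hdR.hasDerivAt_dR hp)).deriv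
  have hT : dT (fun t r ϑ φ => (W r : ℂ) * dR u t r ϑ φ) t r ϑ φ = W r * dT (dR u) t r ϑ φ :=
    deriv_const_mul_field _
  unfold dTR
  rw [isPartialDeriv_dT.map_add hdT hWdR, isPartialDeriv_dR.map_add hdT hWdR, hR, hT]
  ring

/-- `[∂ₜ + V ∂ᵣ, ∂ₜ + W ∂ᵣ] = (V W' − W V') ∂ᵣ`. -/
theorem dTR_comm {V' W' : ℝ} (hV : HasDerivAt V V' r) (hW : HasDerivAt W W' r)
    (hVW : V r * W' = W r * V') (hu : SmoothOnOm rp u) (hp : (t, r, ϑ, φ) ∈ OmSet rp) :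
    dTR V (dTR W u) t r ϑ φ = dTR W (dTR V u) t r ϑ φ := by
  rw [dTR_dTR hW hu hp, dTR_dTR hV hu hp, isPartialDeriv_dT.comm isPartialDeriv_dR hu hp]
  have hVW' : (V r : ℂ) * W' = W r * V' := by exact_mod_cast hVW
  linear_combination (dR u t r ϑ φ) * hVW'

end DTR

section Angular

variable {rp σ : ℝ} {D : F4 → F4} {e : E4} {u v : F4} {t r ϑ φ : ℝ}

def sinDTh (u : F4) : F4 := fun t r ϑ φ => (Real.sin ϑ : ℂ) * dTh u t r ϑ φ

def angular (σ : ℝ) (u : F4) : F4 := fun t r ϑ φ =>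
  ((-(Real.sin ϑ)⁻¹ : ℝ) : ℂ) * dTh (sinDTh u) t r ϑ φ
  + ((-(Real.sin ϑ ^ 2)⁻¹ : ℝ) : ℂ) * dPh (dPh u) t r ϑ φ
  + 4 * σ * Complex.I * ((Real.cos ϑ / Real.sin ϑ ^ 2 : ℝ) : ℂ) * dPh u t r ϑ φ
  + ((4 * (Real.cos ϑ / Real.sin ϑ) ^ 2 + 4 : ℝ) : ℂ) * u t r ϑ φ

theorem angP_eq_angular : angP = angular (-1) := by
  funext u t r ϑ φ
  simp only [angP, angular, sinDTh, dTh]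
  push_cast
  ring

theorem angM_eq_angular : angM = angular 1 := by
  funext u t r ϑ φ
  simp only [angM, angular, sinDTh, dTh]
  push_cast
  ring

theorem SmoothOnOm.sinDTh (hu : SmoothOnOm rp u) : SmoothOnOm rp (sinDTh u) := by
  have := isPartialDeriv_dTh.smoothOnOm hu
  unfold SmoothOnOm Grav.sinDTh at *
  fun_prop

theorem SmoothOnOm.angular (hu : SmoothOnOm rp u) : SmoothOnOm rp (angular σ u) := by
  have h₁ := isPartialDeriv_dTh.smoothOnOm hu.sinDTh
  have h₂ := isPartialDeriv_dPh.smoothOnOm (isPartialDeriv_dPh.smoothOnOm hu)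
  have h₃ := isPartialDeriv_dPh.smoothOnOm hu
  unfold SmoothOnOm Grav.angular at *
  fun_prop (disch := intro p hp; first
    | exact sin_ne_zero_of_mem_omSet hp | exact pow_ne_zero 2 (sin_ne_zero_of_mem_omSet hp))

theorem angular_radial_mul (c : ℝ → ℂ) (u : F4) :
    angular σ (fun t r ϑ φ => c r * u t r ϑ φ) t r ϑ φ = c r * angular σ u t r ϑ φ := by
  simp only [angular, sinDTh, dTh, dPh, deriv_const_mul_field', mul_left_comm _ (c _)]
  ring

theorem angular_congr (h : ∀ t r ϑ φ, (t, r, ϑ, φ) ∈ OmSet rp → u t r ϑ φ = v t r ϑ φ)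
    (hp : (t, r, ϑ, φ) ∈ OmSet rp) : angular σ u t r ϑ φ = angular σ v t r ϑ φ := by
  have hPh := fun t r ϑ φ (hq : (t, r, ϑ, φ) ∈ OmSet rp) => isPartialDeriv_dPh.congr h hq
  have hS : ∀ t r ϑ φ, (t, r, ϑ, φ) ∈ OmSet rp → sinDTh u t r ϑ φ = sinDTh v t r ϑ φ :=
    fun t r ϑ φ hq => by simp only [sinDTh, isPartialDeriv_dTh.congr h hq]
  simp only [angular, isPartialDeriv_dTh.congr hS hp, isPartialDeriv_dPh.congr hPh hp,
    hPh _ _ _ _ hp, h _ _ _ _ hp]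

theorem angular_add (hu : SmoothOnOm rp u) (hv : SmoothOnOm rp v)
    (hp : (t, r, ϑ, φ) ∈ OmSet rp) :
    angular σ (fun t r ϑ φ => u t r ϑ φ + v t r ϑ φ) t r ϑ φ
      = angular σ u t r ϑ φ + angular σ v t r ϑ φ := by
  have hPh : ∀ t r ϑ φ, (t, r, ϑ, φ) ∈ OmSet rp →
      dPh (fun t r ϑ φ => u t r ϑ φ + v t r ϑ φ) t r ϑ φ = dPh u t r ϑ φ + dPh v t r ϑ φ :=
    fun t r ϑ φ hq => isPartialDeriv_dPh.map_add (hu.differentiableAt hq) (hv.differentiableAt hq)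
  have hS : ∀ t r ϑ φ, (t, r, ϑ, φ) ∈ OmSet rp →
      sinDTh (fun t r ϑ φ => u t r ϑ φ + v t r ϑ φ) t r ϑ φ
        = sinDTh u t r ϑ φ + sinDTh v t r ϑ φ := fun t r ϑ φ hq => by
    simp only [sinDTh,
      isPartialDeriv_dTh.map_add (hu.differentiableAt hq) (hv.differentiableAt hq)]
    ring
  have hPhPh := isPartialDeriv_dPh.map_add
    ((isPartialDeriv_dPh.smoothOnOm hu).differentiableAt hp)
    ((isPartialDeriv_dPh.smoothOnOm hv).differentiableAt hp)
  have hThS := isPartialDeriv_dTh.map_add (hu.sinDTh.differentiableAt hp)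
    (hv.sinDTh.differentiableAt hp)
  simp only [angular, isPartialDeriv_dTh.congr hS hp, isPartialDeriv_dPh.congr hPh hp,
    hPh _ _ _ _ hp, hPhPh, hThS]
  ring

theorem IsPartialDeriv.angular_comm (hD : IsPartialDeriv D e) (he : e.2.2 = 0)
    (hu : SmoothOnOm rp u) (hp : (t, r, ϑ, φ) ∈ OmSet rp) :
    D (angular σ u) t r ϑ φ = angular σ (D u) t r ϑ φ := by
  have hS : ∀ t r ϑ φ, (t, r, ϑ, φ) ∈ OmSet rp →
      D (sinDTh u) t r ϑ φ = sinDTh (D u) t r ϑ φ := fun t r ϑ φ hq => by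
    unfold sinDTh
    rw [hD.map_angular_mul he, hD.comm isPartialDeriv_dTh hu hq]
  have hPh : ∀ t r ϑ φ, (t, r, ϑ, φ) ∈ OmSet rp → D (dPh u) t r ϑ φ = dPh (D u) t r ϑ φ :=
    fun t r ϑ φ hq => hD.comm isPartialDeriv_dPh hu hq
  have h₁ := isPartialDeriv_dTh.smoothOnOm hu.sinDTh
  have h₂ := isPartialDeriv_dPh.smoothOnOm (isPartialDeriv_dPh.smoothOnOm hu)
  have h₃ := isPartialDeriv_dPh.smoothOnOm hu
  unfold angular
  rw [hD.map_add ?_ ?_, hD.map_add ?_ ?_, hD.map_add ?_ ?_]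
  · rw [hD.map_angular_mul he, hD.map_angular_mul he, hD.map_angular_mul he,
      hD.map_angular_mul he, hD.comm isPartialDeriv_dTh hu.sinDTh hp,
      isPartialDeriv_dTh.congr hS hp,
      hD.comm isPartialDeriv_dPh (isPartialDeriv_dPh.smoothOnOm hu) hp,
      isPartialDeriv_dPh.congr hPh hp, hPh _ _ _ _ hp]
  all_goals
    refine SmoothOnOm.differentiableAt ?_ hp
    unfold SmoothOnOm at *
    fun_prop (disch := intro p hp; first
      | exact sin_ne_zero_of_mem_omSet hp | exact pow_ne_zero 2 (sin_ne_zero_of_mem_omSet hp))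

theorem dTR_angular {V : ℝ → ℝ} (hV : ContDiffOn ℝ (⊤ : ℕ∞) V (Ioi rp)) (hu : SmoothOnOm rp u)
    (hp : (t, r, ϑ, φ) ∈ OmSet rp) :
    dTR V (angular σ u) t r ϑ φ = angular σ (dTR V u) t r ϑ φ := by
  unfold dTR
  rw [isPartialDeriv_dT.angular_comm rfl hu hp, isPartialDeriv_dR.angular_comm rfl hu hp,
    angular_add (isPartialDeriv_dT.smoothOnOm hu)
      ((isPartialDeriv_dR.smoothOnOm hu).radial_mul hV) hp,
    angular_radial_mul]

end Angular

section NullDerivatives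

variable {M k rp : ℝ} {u : F4} {t r ϑ φ : ℝ}

def nullSpeed (M k ε r : ℝ) : ℝ := ε * (Del M k r / r ^ 2)

theorem opL_eq_dTR (M k : ℝ) : opL M k = dTR (nullSpeed M k 1) := by
  funext u t r ϑ φ
  simp only [opL, dTR, nullSpeed, one_mul]

theorem opLb_eq_dTR (M k : ℝ) : opLb M k = dTR (nullSpeed M k (-1)) := by
  funext u t r ϑ φ
  simp only [opLb, dTR, nullSpeed, Complex.ofReal_mul, Complex.ofReal_neg, Complex.ofReal_one]
  ring

theorem contDiffOn_nullSpeed (hrp : 0 < rp) (ε : ℝ) :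
    ContDiffOn ℝ (⊤ : ℕ∞) (nullSpeed M k ε) (Ioi rp) := by
  unfold nullSpeed Del
  fun_prop (disch := intro r hr; exact pow_ne_zero 2 (hrp.trans hr).ne')

theorem dTR_nullSpeed_comm (hrp : 0 < rp) (ε ε' : ℝ) (hu : SmoothOnOm rp u)
    (hp : (t, r, ϑ, φ) ∈ OmSet rp) :
    dTR (nullSpeed M k ε) (dTR (nullSpeed M k ε') u) t r ϑ φ
      = dTR (nullSpeed M k ε') (dTR (nullSpeed M k ε) u) t r ϑ φ := by
  have hν := (hasDerivAt_Del (M := M) (k := k)).div (hasDerivAt_pow 2 r)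
    (pow_ne_zero 2 (hrp.trans hp.1).ne')
  exact dTR_comm (hν.const_mul ε) (hν.const_mul ε') (by simp only [nullSpeed]; ring) hu hp

end NullDerivatives

section Chandrasekhar

variable {M k rp ε σ : ℝ} {u α F ψ Ψ : F4} {t r ϑ φ : ℝ}

def teukolsky (M k ε σ : ℝ) (u : F4) : F4 := fun t r ϑ φ =>
  - dTR (nullSpeed M k ε) (dTR (nullSpeed M k (-ε)) u) t r ϑ φ
  + 2 * ε * ((wwP M k r / ww M k r : ℝ) : ℂ) * dTR (nullSpeed M k (-ε)) u t r ϑ φ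
  - ((ww M k r : ℝ) : ℂ)
    * (angular σ u t r ϑ φ - 2 * u t r ϑ φ + ((6 * M / r : ℝ) : ℂ) * u t r ϑ φ)

def reggeWheeler (M k ε σ : ℝ) (u : F4) : F4 := fun t r ϑ φ =>
  - dTR (nullSpeed M k ε) (dTR (nullSpeed M k (-ε)) u) t r ϑ φ
  - ((ww M k r : ℝ) : ℂ) * (angular σ u t r ϑ φ - ((6 * M / r : ℝ) : ℂ) * u t r ϑ φ)

theorem winv_eq_of_teukolsky (hrp : 0 < rp) (hroot : rp + k ^ 2 * rp ^ 3 - 2 * M = 0)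
    (hα : SmoothOnOm rp α)
    (hT : ∀ t r ϑ φ, (t, r, ϑ, φ) ∈ OmSet rp → teukolsky M k ε σ α t r ϑ φ = F t r ϑ φ)
    (hψ : ψ = winv M k (dTR (nullSpeed M k (-ε)) α)) (hp : (t, r, ϑ, φ) ∈ OmSet rp) :
    winv M k F t r ϑ φ = ((ε * wLogDeriv M r : ℝ) : ℂ) * ψ t r ϑ φ
      - dTR (nullSpeed M k ε) ψ t r ϑ φ - angular σ α t r ϑ φ
      + ((2 - 6 * M / r : ℝ) : ℂ) * α t r ϑ φ := by
  have hr : r ≠ 0 := (hrp.trans hp.1).ne'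
  have hw : ww M k r ≠ 0 := (ww_pos hrp hroot hp.1).ne'
  have hLψ : dTR (nullSpeed M k ε) ψ t r ϑ φ
      = (((ww M k r)⁻¹ : ℝ) : ℂ) * dTR (nullSpeed M k ε) (dTR (nullSpeed M k (-ε)) α) t r ϑ φ
        + ((nullSpeed M k ε r * (-((6 * M - 2 * r) / r ^ 4) / ww M k r ^ 2) : ℝ) : ℂ)
          * dTR (nullSpeed M k (-ε)) α t r ϑ φ := by
    rw [hψ, winv_eq]
    exact dTR_radial_mul ((hasDerivAt_ww hr).inv hw) (hα.dTR (contDiffOn_nullSpeed hrp _)) hp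
  rw [hLψ, hψ]
  simp only [winv]
  rw [← hT t r ϑ φ hp]
  simp only [teukolsky, wwP, wLogDeriv, nullSpeed, Del_eq_ww_mul hr]
  have : (ww M k r : ℂ) ≠ 0 := by exact_mod_cast hw
  have : (r : ℂ) ≠ 0 := by exact_mod_cast hr
  push_cast
  field_simp
  ring

theorem reggeWheeler_eq_of_teukolsky (hrp : 0 < rp)
    (hroot : rp + k ^ 2 * rp ^ 3 - 2 * M = 0) (hε : ε ^ 2 = 1) (hα : SmoothOnOm rp α)
    (hT : ∀ t r ϑ φ, (t, r, ϑ, φ) ∈ OmSet rp → teukolsky M k ε σ α t r ϑ φ = F t r ϑ φ)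
    (hψ : ψ = winv M k (dTR (nullSpeed M k (-ε)) α))
    (hΨ : Ψ = winv M k (dTR (nullSpeed M k (-ε)) ψ)) (hp : (t, r, ϑ, φ) ∈ OmSet rp) :
    reggeWheeler M k ε σ ψ t r ϑ φ
      = dTR (nullSpeed M k (-ε)) (winv M k F) t r ϑ φ
        - ε * (((wwP M k r : ℝ) : ℂ) * Ψ t r ϑ φ)
        + ε * (6 * (M : ℂ) * ((ww M k r : ℝ) : ℂ) * α t r ϑ φ) := by
  have hr : r ≠ 0 := (hrp.trans hp.1).ne'
  have hwC : (ww M k r : ℂ) ≠ 0 := by exact_mod_cast (ww_pos hrp hroot hp.1).ne'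
  have hrC : (r : ℂ) ≠ 0 := by exact_mod_cast hr
  have hG := contDiffOn_nullSpeed (M := M) (k := k) hrp (-ε)
  have hψs : SmoothOnOm rp ψ := hψ ▸ (hα.dTR hG).winv hrp hroot
  have hGα : ∀ t r ϑ φ, (t, r, ϑ, φ) ∈ OmSet rp →
      dTR (nullSpeed M k (-ε)) α t r ϑ φ = (ww M k r : ℂ) * ψ t r ϑ φ := by
    intro t r ϑ φ hq
    have : (ww M k r : ℂ) ≠ 0 := by exact_mod_cast (ww_pos hrp hroot hq.1).ne'
    rw [hψ, winv, mul_inv_cancel_left₀ this]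
  have hGψ : dTR (nullSpeed M k (-ε)) ψ t r ϑ φ = (ww M k r : ℂ) * Ψ t r ϑ φ := by
    rw [hΨ, winv, mul_inv_cancel_left₀ hwC]
  have hc : ContDiffOn ℝ (⊤ : ℕ∞) (fun r => 2 - 6 * M / r) (Ioi rp) := by
    fun_prop (disch := intro r hr; exact (hrp.trans hr).ne')
  have hc' : HasDerivAt (fun r => 2 - 6 * M / r) (6 * M / r ^ 2) r := by
    refine ((hasDerivAt_const r 2).sub
      ((hasDerivAt_const r (6 * M)).div (hasDerivAt_id r) hr)).congr_deriv ?_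
    simp only [id]
    field_simp
    ring
  have hA := hψs.radial_mul (c := fun r => ε * wLogDeriv M r)
    (contDiffOn_const.mul (contDiffOn_wLogDeriv hrp))
  have hB := hψs.dTR (contDiffOn_nullSpeed (M := M) (k := k) hrp ε)
  have hC := hα.angular (σ := σ)
  rw [dTR_congr (fun t r ϑ φ hq => winv_eq_of_teukolsky hrp hroot hα hT hψ hq) hp,
    dTR_add ((hA.sub hB).sub hC) (hα.radial_mul hc) hp, dTR_sub (hA.sub hB) hC hp,
    dTR_sub hA hB hp, dTR_radial_mul ((hasDerivAt_wLogDeriv hr).const_mul ε) hψs hp,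
    dTR_radial_mul hc' hα hp, dTR_nullSpeed_comm hrp _ _ hψs hp, dTR_angular hG hα hp,
    angular_congr hGα hp, angular_radial_mul, hGα t r ϑ φ hp, hGψ]
  simp only [reggeWheeler, wwP, wLogDeriv, nullSpeed, Del_eq_ww_mul hr]
  push_cast
  field_simp
  linear_combination (ww M k r * r * ψ t r ϑ φ * (2 * r - 12 * M) : ℂ)
    * (by exact_mod_cast hε : (ε : ℂ) ^ 2 = 1)

end Chandrasekhar

section Specializations

variable {M k rp : ℝ} {u : F4} {t r ϑ φ : ℝ}

theorem Tp_eq_teukolsky : Tp M k = teukolsky M k 1 (-1) := by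
  funext u t r ϑ φ
  simp only [Tp, teukolsky, opL_eq_dTR, opLb_eq_dTR, angP_eq_angular]
  push_cast
  ring

theorem RWp_eq_reggeWheeler : RWp M k = reggeWheeler M k 1 (-1) := by
  funext u t r ϑ φ
  simp only [RWp, reggeWheeler, opL_eq_dTR, opLb_eq_dTR, angP_eq_angular]

theorem Tm_eq_teukolsky (hrp : 0 < rp) (hu : SmoothOnOm rp u) (hp : (t, r, ϑ, φ) ∈ OmSet rp) :
    Tm M k u t r ϑ φ = teukolsky M k (-1) 1 u t r ϑ φ := by
  simp only [Tm, teukolsky, opL_eq_dTR, opLb_eq_dTR, angM_eq_angular, neg_neg,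
    dTR_nullSpeed_comm hrp 1 (-1) hu hp]
  push_cast
  ring

theorem RWm_eq_reggeWheeler (hrp : 0 < rp) (hu : SmoothOnOm rp u)
    (hp : (t, r, ϑ, φ) ∈ OmSet rp) :
    RWm M k u t r ϑ φ = reggeWheeler M k (-1) 1 u t r ϑ φ := by
  simp only [RWm, reggeWheeler, opL_eq_dTR, opLb_eq_dTR, angM_eq_angular, neg_neg,
    dTR_nullSpeed_comm hrp 1 (-1) hu hp]

end Specializations

theorem statement2_general
    (M k rp : ℝ) (hrp : 0 < rp)
    (hroot : rp + k ^ 2 * rp ^ 3 - 2 * M = 0)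
    (αp αm Fp Fm : F4)
    (hαp : SmoothOnOm rp αp) (hαm : SmoothOnOm rp αm)
    (hTp : ∀ t r ϑ φ : ℝ, (t, r, ϑ, φ) ∈ OmSet rp → Tp M k αp t r ϑ φ = Fp t r ϑ φ)
    (hTm : ∀ t r ϑ φ : ℝ, (t, r, ϑ, φ) ∈ OmSet rp → Tm M k αm t r ϑ φ = Fm t r ϑ φ)
    (ψp Ψp ψm Ψm : F4)
    (hψp : ψp = winv M k (opLb M k αp))
    (hΨp : Ψp = winv M k (opLb M k ψp))
    (hψm : ψm = winv M k (opL M k αm))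
    (hΨm : Ψm = winv M k (opL M k ψm)) :
    ∀ t r ϑ φ : ℝ, (t, r, ϑ, φ) ∈ OmSet rp →
      RWp M k ψp t r ϑ φ =
        opLb M k (winv M k Fp) t r ϑ φ - ((wwP M k r : ℝ) : ℂ) * Ψp t r ϑ φ
          + 6 * (M : ℂ) * ((ww M k r : ℝ) : ℂ) * αp t r ϑ φ
      ∧
      RWm M k ψm t r ϑ φ =
        opL M k (winv M k Fm) t r ϑ φ + ((wwP M k r : ℝ) : ℂ) * Ψm t r ϑ φ
          - 6 * (M : ℂ) * ((ww M k r : ℝ) : ℂ) * αm t r ϑ φ := by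
  intro t r ϑ φ hp
  rw [opLb_eq_dTR] at hψp hΨp
  rw [opL_eq_dTR] at hψm hΨm
  rw [opLb_eq_dTR, opL_eq_dTR]
  constructor
  · rw [RWp_eq_reggeWheeler, reggeWheeler_eq_of_teukolsky hrp hroot (by norm_num) hαp
      (fun t r ϑ φ hq => Tp_eq_teukolsky (M := M) (k := k) ▸ hTp t r ϑ φ hq) hψp hΨp hp]
    push_cast
    ring
  · have hψms : SmoothOnOm rp ψm := hψm ▸ (hαm.dTR (contDiffOn_nullSpeed hrp _)).winv hrp hroot
    -- `1 = -(-1)` matches the `-ε` of the generic lemma at `ε = -1`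
    rw [← neg_neg (1 : ℝ)] at hψm hΨm
    rw [RWm_eq_reggeWheeler hrp hψms hp, reggeWheeler_eq_of_teukolsky hrp hroot (by norm_num) hαm
      (fun t r ϑ φ hq => (Tm_eq_teukolsky hrp hαm hq).symm.trans (hTm t r ϑ φ hq)) hψm hΨm hp,
      neg_neg]
    push_cast
    ring

/-- If `𝔗⁽±²⁾α̃⁽±²⁾ = F⁽±²⁾` then the intermediate Chandrasekhar
quantities `ψ⁽±²⁾` satisfy the inhomogeneous Regge–Wheeler equations
`𝕽⁽⁺²⁾ψ⁽⁺²⁾ = L̲(w⁻¹F⁽⁺²⁾) − w′Ψ⁽⁺²⁾ + 6Mwα̃⁽⁺²⁾` and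
`𝕽⁽⁻²⁾ψ⁽⁻²⁾ = L(w⁻¹F⁽⁻²⁾) + w′Ψ⁽⁻²⁾ − 6Mwα̃⁽⁻²⁾` on `Ω`. -/
theorem statement2
    (M k rp : ℝ) (hM : 0 < M) (hk : 0 < k) (hrp : 0 < rp)
    (hroot : rp + k ^ 2 * rp ^ 3 - 2 * M = 0)
    (αp αm Fp Fm : F4)
    (hαp : SmoothOnOm rp αp) (hαm : SmoothOnOm rp αm)
    (hFp : SmoothOnOm rp Fp) (hFm : SmoothOnOm rp Fm)
    (hTp : ∀ t r ϑ φ : ℝ, (t, r, ϑ, φ) ∈ OmSet rp → Tp M k αp t r ϑ φ = Fp t r ϑ φ)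
    (hTm : ∀ t r ϑ φ : ℝ, (t, r, ϑ, φ) ∈ OmSet rp → Tm M k αm t r ϑ φ = Fm t r ϑ φ)
    (ψp Ψp ψm Ψm : F4)
    (hψp : ψp = winv M k (opLb M k αp))
    (hΨp : Ψp = winv M k (opLb M k ψp))
    (hψm : ψm = winv M k (opL M k αm))
    (hΨm : Ψm = winv M k (opL M k ψm)) :
    ∀ t r ϑ φ : ℝ, (t, r, ϑ, φ) ∈ OmSet rp →
      RWp M k ψp t r ϑ φ =
        opLb M k (winv M k Fp) t r ϑ φ - ((wwP M k r : ℝ) : ℂ) * Ψp t r ϑ φ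
          + 6 * (M : ℂ) * ((ww M k r : ℝ) : ℂ) * αp t r ϑ φ
      ∧
      RWm M k ψm t r ϑ φ =
        opL M k (winv M k Fm) t r ϑ φ + ((wwP M k r : ℝ) : ℂ) * Ψm t r ϑ φ
          - 6 * (M : ℂ) * ((ww M k r : ℝ) : ℂ) * αm t r ϑ φ :=
  statement2_general M k rp hrp hroot αp αm Fp Fm hαp hαm hTp hTm ψp Ψp ψm Ψm hψp hΨp hψm hΨm

end Grav
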